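/- Let C be an abelian category equipped with a braided monoidal structure in which every object has a right dual and in which the tensor product is exact in each variable. For a class S of objects of C, let ⟨S⟩ denote the smallest thick tensor ideal with the two-out-of-three property containing S (the intersection of all thick tensor ideals with the two-out-of-three property containing S). Then for every thick tensor ideal J₀ with the two-out-of-three property and all objects a, b of C: whenever x ∈ ⟨J₀ ∪ {a}⟩ and y ∈ ⟨J₀ ∪ {b}⟩, the tensor product x ⊗ y belongs to ⟨J₀ ∪ {a ⊗ b}⟩. -/
import Mathlib


open CategoryTheory Limits MonoidalCategory

/-- A thick tensor ideal in an abelian monoidal category: a class of objects containing the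
zero object and closed under finite direct sums, retracts and tensoring with arbitrary
objects on either side. -/
structure IsThickTensorIdeal {C : Type*} [Category C] [Abelian C] [MonoidalCategory C]
    (J : Set C) : Prop where
  zero_mem : ∀ X : C, IsZero X → X ∈ J
  biprod_mem : ∀ X Y : C, X ∈ J → Y ∈ J → (X ⊞ Y) ∈ J
  retract_mem : ∀ X Y : C, (∃ (i : X ⟶ Y) (r : Y ⟶ X), i ≫ r = 𝟙 X) → Y ∈ J → X ∈ J
  tensor_mem_left : ∀ X Y : C, Y ∈ J → (X ⊗ Y) ∈ J
  tensor_mem_right : ∀ X Y : C, Y ∈ J → (Y ⊗ X) ∈ J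

/-- A class of objects `J` has the two-out-of-three property if for every short exact
sequence `0 → X₁ → X₂ → X₃ → 0` in which two of `X₁`, `X₂`, `X₃` belong to `J`,
the third also belongs to `J`. -/
def TwoOutOfThree {C : Type*} [Category C] [Abelian C] (J : Set C) : Prop :=
  ∀ S : ShortComplex C, S.ShortExact →
    ((S.X₁ ∈ J → S.X₂ ∈ J → S.X₃ ∈ J) ∧ (S.X₁ ∈ J → S.X₃ ∈ J → S.X₂ ∈ J) ∧
      (S.X₂ ∈ J → S.X₃ ∈ J → S.X₁ ∈ J))

/-- A prime thick tensor ideal with the two-out-of-three property: it is proper (does not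
contain the monoidal unit) and `A ⊗ B ∈ P` implies `A ∈ P` or `B ∈ P`. -/
def IsPrimeThickTensorIdeal {C : Type*} [Category C] [Abelian C] [MonoidalCategory C]
    (P : Set C) : Prop :=
  IsThickTensorIdeal P ∧ TwoOutOfThree P ∧ (𝟙_ C) ∉ P ∧
    ∀ A B : C, (A ⊗ B) ∈ P → A ∈ P ∨ B ∈ P

/-- The `n`-th tensor power of an object in a monoidal category,
with `M^{⊗0} = 𝟙` and `M^{⊗(n+1)} = M^{⊗n} ⊗ M`. -/
def tensorPowObj {C : Type*} [Category C] [MonoidalCategory C] (M : C) : ℕ → C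
  | 0 => 𝟙_ C
  | n + 1 => tensorPowObj M n ⊗ M

/-- The smallest thick tensor ideal with the two-out-of-three property containing a class
`S` of objects: the intersection of all such ideals containing `S`. -/
def genThickTensorIdeal {C : Type*} [Category C] [Abelian C] [MonoidalCategory C]
    (S : Set C) : Set C :=
  ⋂₀ {J : Set C | IsThickTensorIdeal J ∧ TwoOutOfThree J ∧ S ⊆ J}

section Aux

variable {C : Type*} [Category C] [Abelian C] [MonoidalCategory C]

lemma IsThickTensorIdeal.mem_of_iso {J : Set C} (hJ : IsThickTensorIdeal J) {X Y : C}
    (e : X ≅ Y) (h : Y ∈ J) : X ∈ J :=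
  hJ.retract_mem X Y ⟨e.hom, e.inv, e.hom_inv_id⟩ h

lemma gen_isIdeal (S : Set C) : IsThickTensorIdeal (genThickTensorIdeal S) where
  zero_mem X h := fun _ hJ => hJ.1.zero_mem X h
  biprod_mem X Y hX hY := fun J hJ => hJ.1.biprod_mem X Y (hX J hJ) (hY J hJ)
  retract_mem X Y hret hY := fun J hJ => hJ.1.retract_mem X Y hret (hY J hJ)
  tensor_mem_left X Y hY := fun J hJ => hJ.1.tensor_mem_left X Y (hY J hJ)
  tensor_mem_right X Y hY := fun J hJ => hJ.1.tensor_mem_right X Y (hY J hJ)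

lemma gen_two (S : Set C) : TwoOutOfThree (genThickTensorIdeal S) := by
  intro T hT
  refine ⟨fun h1 h2 J hJ => (hJ.2.1 T hT).1 (h1 J hJ) (h2 J hJ),
    fun h1 h2 J hJ => (hJ.2.1 T hT).2.1 (h1 J hJ) (h2 J hJ),
    fun h1 h2 J hJ => (hJ.2.1 T hT).2.2 (h1 J hJ) (h2 J hJ)⟩

lemma subset_gen (S : Set C) : S ⊆ genThickTensorIdeal S :=
  fun x hx J hJ => hJ.2.2 hx

lemma gen_subset {S J : Set C} (hJ : IsThickTensorIdeal J) (hJ23 : TwoOutOfThree J)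
    (hS : S ⊆ J) : genThickTensorIdeal S ⊆ J :=
  fun x hx => hx J ⟨hJ, hJ23, hS⟩

/-- From the two-out-of-three property, closure under binary biproducts follows. -/
lemma biprod_of_two {J : Set C} (hJ : TwoOutOfThree J) (X Y : C) (hX : X ∈ J) (hY : Y ∈ J) :
    (X ⊞ Y) ∈ J := by
  let T : ShortComplex C := ShortComplex.mk (biprod.inl : X ⟶ X ⊞ Y) (biprod.snd) (by simp)
  have hsplit : T.Splitting :=
    { r := biprod.fst
      s := biprod.inr
      f_r := by simp [T]
      s_g := by simp [T]
      id := by simpa [T] using biprod.total }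
  exact (hJ T hsplit.shortExact).2.1 hX hY

variable [BraidedCategory C]

/-- For a thick tensor ideal `G` with the two-out-of-three property and an object `z`,
the class `{w | z ⊗ w ∈ G}` is again a thick tensor ideal with the two-out-of-three
property. -/
lemma leftDivide (hL : ∀ X : C, PreservesFiniteLimits (tensorLeft X))
    (hL' : ∀ X : C, PreservesFiniteColimits (tensorLeft X))
    (G : Set C) (hG : IsThickTensorIdeal G) (hG23 : TwoOutOfThree G) (z : C) :
    IsThickTensorIdeal {w : C | z ⊗ w ∈ G} ∧ TwoOutOfThree {w : C | z ⊗ w ∈ G} := by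
  haveI := hL z
  haveI := hL' z
  haveI : (tensorLeft z).PreservesZeroMorphisms := inferInstance
  have h23 : TwoOutOfThree {w : C | z ⊗ w ∈ G} := by
    intro T hT
    have hmap : (T.map (tensorLeft z)).ShortExact := hT.map_of_exact (tensorLeft z)
    exact hG23 (T.map (tensorLeft z)) hmap
  refine ⟨?_, h23⟩
  constructor
  · intro X h
    exact hG.zero_mem _ ((tensorLeft z).map_isZero h)
  · intro X Y hX hY
    exact biprod_of_two h23 X Y hX hY
  · rintro X Y ⟨i, r, hir⟩ hY
    exact hG.retract_mem (z ⊗ X) (z ⊗ Y)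
      ⟨z ◁ i, z ◁ r, by rw [← MonoidalCategory.whiskerLeft_comp, hir,
        MonoidalCategory.whiskerLeft_id]⟩ hY
  · intro X W hW
    have e : z ⊗ (X ⊗ W) ≅ X ⊗ (z ⊗ W) :=
      (α_ z X W).symm ≪≫ whiskerRightIso (β_ z X) W ≪≫ α_ X z W
    exact hG.mem_of_iso e (hG.tensor_mem_left X (z ⊗ W) hW)
  · intro X W hW
    have e : z ⊗ (W ⊗ X) ≅ (z ⊗ W) ⊗ X := (α_ z W X).symm
    exact hG.mem_of_iso e (hG.tensor_mem_right X (z ⊗ W) hW)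

end Aux

/-- Multiplicativity of generated ideals: if `x ∈ ⟨J₀ ∪ {a}⟩` and `y ∈ ⟨J₀ ∪ {b}⟩`, then
`x ⊗ y ∈ ⟨J₀ ∪ {a ⊗ b}⟩`. -/
theorem stmt7 {C : Type*} [Category C] [Abelian C] [MonoidalCategory C] [BraidedCategory C]
    [RightRigidCategory C]
    (hL : ∀ X : C, PreservesFiniteLimits (tensorLeft X))
    (hL' : ∀ X : C, PreservesFiniteColimits (tensorLeft X))
    (hR : ∀ X : C, PreservesFiniteLimits (tensorRight X))
    (hR' : ∀ X : C, PreservesFiniteColimits (tensorRight X))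
    (J₀ : Set C) (hJ₀ : IsThickTensorIdeal J₀) (hJ₀23 : TwoOutOfThree J₀)
    (a b x y : C)
    (hx : x ∈ genThickTensorIdeal (J₀ ∪ {a}))
    (hy : y ∈ genThickTensorIdeal (J₀ ∪ {b})) :
    (x ⊗ y) ∈ genThickTensorIdeal (J₀ ∪ {a ⊗ b}) := by
  set G : Set C := genThickTensorIdeal (J₀ ∪ {a ⊗ b}) with hGdef
  have hG : IsThickTensorIdeal G := gen_isIdeal _
  have hG23 : TwoOutOfThree G := gen_two _
  have hJ₀G : J₀ ⊆ G := Set.Subset.trans Set.subset_union_left (subset_gen _)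
  have habG : (a ⊗ b) ∈ G := subset_gen _ (Set.mem_union_right _ rfl)
  -- Step 1: a ⊗ y ∈ G
  obtain ⟨hT1, hT1_23⟩ := leftDivide hL hL' G hG hG23 a
  have hay : a ⊗ y ∈ G := by
    have hsub : (J₀ ∪ {b}) ⊆ {w : C | a ⊗ w ∈ G} := by
      rintro w (hw | hw)
      · exact hG.tensor_mem_left a w (hJ₀G hw)
      · cases hw
        exact habG
    exact gen_subset hT1 hT1_23 hsub hy
  -- Step 2: y ⊗ x ∈ G, using the ideal {w | y ⊗ w ∈ G}
  obtain ⟨hT2, hT2_23⟩ := leftDivide hL hL' G hG hG23 y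
  have hyx : y ⊗ x ∈ G := by
    have hsub : (J₀ ∪ {a}) ⊆ {w : C | y ⊗ w ∈ G} := by
      rintro w (hw | hw)
      · exact hG.tensor_mem_left y w (hJ₀G hw)
      · cases hw
        exact hG.mem_of_iso (β_ y a) hay
    exact gen_subset hT2 hT2_23 hsub hx
  exact hG.mem_of_iso (β_ x y) hyx
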